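/- For two quantum measurements M_i = {M_i^a} (i=0,1) with the same outcome set and a state ρ on X⊗Y, the trace distance between the post-measurement classical-quantum states ρ_i = Σ_a |a⟩⟨a| ⊗ M_i^a ρ (M_i^a)* is at most dis_ρ(M_0,M_1) = [Σ_a ‖M_0^a − M_1^a‖_ρ²]^{1/2}, where ‖M‖_ρ = √(Tr(M*Mρ)). -/

import Mathlib

open Matrix Kronecker ComplexOrder

/-- The trace norm of a matrix: the trace of `√(AᴴA)`. -/
noncomputable def traceNorm {m : Type*} [Fintype m] [DecidableEq m]
    (A : Matrix m m ℂ) : ℝ :=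
  (((Matrix.posSemidef_conjTranspose_mul_self A).1.eigenvectorUnitary.1 *
      diagonal (((↑) : ℝ → ℂ) ∘ (√·) ∘ (Matrix.posSemidef_conjTranspose_mul_self A).1.eigenvalues) *
      (star (Matrix.posSemidef_conjTranspose_mul_self A).1.eigenvectorUnitary :
        Matrix m m ℂ)).trace).re

/-- The trace distance between two matrices. -/
noncomputable def traceDist {m : Type*} [Fintype m] [DecidableEq m]
    (ρ σ : Matrix m m ℂ) : ℝ :=
  traceNorm (ρ - σ) / 2

/-- The state-dependent squared seminorm `‖M‖_ρ² = Tr(MᴴMρ)`. -/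
noncomputable def snormSq {m : Type*} [Fintype m] (ρ M : Matrix m m ℂ) : ℝ :=
  ((Mᴴ * M * ρ).trace).re

/-- The post-measurement classical-quantum state `∑ a |a⟩⟨a| ⊗ (M_a ⊗ I) ρ (M_a ⊗ I)ᴴ`
for a measurement acting on the first tensor factor of `ρ`. -/
noncomputable def postState {nx ny K : ℕ}
    (ρ : Matrix (Fin nx × Fin ny) (Fin nx × Fin ny) ℂ)
    (N : Fin K → Matrix (Fin nx) (Fin nx) ℂ) :
    Matrix (Fin K × (Fin nx × Fin ny)) (Fin K × (Fin nx × Fin ny)) ℂ :=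
  ∑ a, Matrix.single a a (1 : ℂ) ⊗ₖ
    ((N a ⊗ₖ (1 : Matrix (Fin ny) (Fin ny) ℂ)) * ρ *
      (N a ⊗ₖ (1 : Matrix (Fin ny) (Fin ny) ℂ))ᴴ)

/-!
The difference of the two post-measurement states is block diagonal in the outcome `a`, so its
trace norm is the sum over `a` of the trace norms of
`M₀ρM₀ᴴ - M₁ρM₁ᴴ = (M₀ - M₁)ρM₀ᴴ + M₁ρ(M₀ - M₁)ᴴ`.
The trace norm of a matrix `A` is `Re Tr(UᴴA)` for a contraction `U` (polar decomposition),
and `Re Tr(Uᴴ Z ρ Wᴴ)` is the ρ-semi-inner product of `UW` and `Z`, so Cauchy–Schwarz bounds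
each block by `‖M₀ - M₁‖_ρ (‖M₀‖_ρ + ‖M₁‖_ρ)`. Cauchy–Schwarz over the outcomes together with
`∑ₐ ‖Mᵢᵃ‖_ρ² = Tr ρ = 1` then bounds the trace norm by `2 dis_ρ(M₀, M₁)`.
-/

open scoped MatrixOrder

lemma Matrix.kronecker_sub {α l m n p : Type*} [Ring α] (A : Matrix l m α) (B C : Matrix n p α) :
    A ⊗ₖ (B - C) = A ⊗ₖ B - A ⊗ₖ C := by
  ext
  simp [mul_sub]

lemma Matrix.sub_kronecker {α l m n p : Type*} [Ring α] (A B : Matrix l m α) (C : Matrix n p α) :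
    (A - B) ⊗ₖ C = A ⊗ₖ C - B ⊗ₖ C := by
  ext
  simp [sub_mul]

lemma Matrix.sum_kronecker {ι α l m n p : Type*} [CommSemiring α] (s : Finset ι)
    (A : ι → Matrix l m α) (B : Matrix n p α) :
    (∑ i ∈ s, A i) ⊗ₖ B = ∑ i ∈ s, A i ⊗ₖ B := by
  ext
  simp [Matrix.sum_apply, Finset.sum_mul]

section TraceNorm

variable {m : Type*} [Fintype m] [DecidableEq m]

lemma cfcAbs_eq_cfc_sqrt (A : Matrix m m ℂ) : CFC.abs A = cfc Real.sqrt (Aᴴ * A) := by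
  rw [CFC.abs, star_eq_conjTranspose,
    CFC.sqrt_eq_real_sqrt _ (posSemidef_conjTranspose_mul_self A).nonneg, cfcₙ_eq_cfc]

lemma traceNorm_eq_re_trace_cfcAbs (A : Matrix m m ℂ) : traceNorm A = (CFC.abs A).trace.re := by
  rw [cfcAbs_eq_cfc_sqrt, (posSemidef_conjTranspose_mul_self A).1.cfc_eq]
  rfl

/-- The witness is `U = A (AᴴA)^(-1/2)`, where `(√x)⁻¹` is read with `0⁻¹ = 0`, so that `UᴴU`
is the projection onto the support of `AᴴA`. -/
lemma exists_conjTranspose_mul_eq_cfcAbs (A : Matrix m m ℂ) :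
    ∃ U : Matrix m m ℂ, Uᴴ * U ≤ 1 ∧ Uᴴ * A = CFC.abs A := by
  set P := Aᴴ * A with hP
  have hPsa : IsSelfAdjoint P := (posSemidef_conjTranspose_mul_self A).1
  have hcont (f : ℝ → ℝ) : ContinuousOn f (spectrum ℝ P) := P.finite_real_spectrum.continuousOn f
  set G := cfc (fun x : ℝ => (√x)⁻¹) P
  have hG : Gᴴ = G := (cfc_predicate _ P : IsSelfAdjoint G)
  have hGP : G * P = CFC.abs A := by
    rw [cfcAbs_eq_cfc_sqrt, ← hP]
    conv_lhs => rw [← cfc_id' ℝ P, ← cfc_mul _ _ P (hcont _) (hcont _)]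
    exact cfc_congr fun x _ => by rw [← div_eq_inv_mul, Real.div_sqrt]
  have hUA : (A * G)ᴴ * A = CFC.abs A := by
    rw [conjTranspose_mul, hG, Matrix.mul_assoc, ← hGP]
  refine ⟨A * G, ?_, hUA⟩
  calc (A * G)ᴴ * (A * G) = cfc Real.sqrt P * G := by
        rw [← Matrix.mul_assoc, hUA, cfcAbs_eq_cfc_sqrt]
    _ = cfc (fun x : ℝ => √x / √x) P := (cfc_mul _ _ P (hcont _) (hcont _)).symm
    _ ≤ 1 := cfc_le_one _ P fun x _ => div_self_le_one _

end TraceNorm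

section BlockDiagonal

variable {K n : Type*} [Fintype K] [DecidableEq K]

lemma conjTranspose_sum_single_kronecker (X : K → Matrix n n ℂ) :
    (∑ a, single a a (1 : ℂ) ⊗ₖ X a)ᴴ = ∑ a, single a a (1 : ℂ) ⊗ₖ (X a)ᴴ := by
  simp [conjTranspose_sum, conjTranspose_kronecker]

lemma posSemidef_single_one (a : K) : (single a a (1 : ℂ)).PosSemidef := by
  simpa using posSemidef_conjTranspose_mul_self (single a a (1 : ℂ))

variable [Fintype n]

lemma sum_single_kronecker_mul_sum_single_kronecker (X Y : K → Matrix n n ℂ) :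
    (∑ a, single a a (1 : ℂ) ⊗ₖ X a) * (∑ b, single b b (1 : ℂ) ⊗ₖ Y b) =
      ∑ a, single a a (1 : ℂ) ⊗ₖ (X a * Y a) := by
  simp only [Finset.sum_mul_sum, ← mul_kronecker_mul]
  refine Finset.sum_congr rfl fun a _ => ?_
  rw [Finset.sum_eq_single_of_mem a (Finset.mem_univ a) fun b _ hb => ?_,
    single_mul_single_same, one_mul]
  simp [hb.symm]

variable [DecidableEq n]

lemma cfcAbs_sum_single_kronecker (D : K → Matrix n n ℂ) :
    CFC.abs (∑ a, single a a (1 : ℂ) ⊗ₖ D a) = ∑ a, single a a (1 : ℂ) ⊗ₖ CFC.abs (D a) := by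
  refine CFC.sqrt_unique ?_ (Finset.sum_nonneg fun a _ => ?_)
  · rw [sum_single_kronecker_mul_sum_single_kronecker, star_eq_conjTranspose,
      conjTranspose_sum_single_kronecker, sum_single_kronecker_mul_sum_single_kronecker]
    simp only [CFC.abs_mul_abs, star_eq_conjTranspose]
  · exact ((posSemidef_single_one a).kronecker (CFC.abs_nonneg (D a)).posSemidef).nonneg

lemma traceNorm_sum_single_kronecker (D : K → Matrix n n ℂ) :
    traceNorm (∑ a, single a a (1 : ℂ) ⊗ₖ D a) = ∑ a, traceNorm (D a) := by
  simp [traceNorm_eq_re_trace_cfcAbs, cfcAbs_sum_single_kronecker, trace_sum, trace_kronecker]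

end BlockDiagonal

section Seminorm

variable {m : Type*} [Fintype m] {ρ : Matrix m m ℂ}

lemma re_trace_mul_nonneg [DecidableEq m] {P : Matrix m m ℂ} (hP : P.PosSemidef)
    (hρ : ρ.PosSemidef) : 0 ≤ (P * ρ).trace.re := by
  set R := CFC.sqrt ρ
  have hR : Rᴴ = R := (CFC.sqrt_nonneg ρ).isSelfAdjoint
  have h : (P * ρ).trace = (R * P * Rᴴ).trace := by
    rw [hR, ← CFC.sqrt_mul_sqrt_self ρ hρ.nonneg, ← Matrix.mul_assoc, trace_mul_comm,
      Matrix.mul_assoc]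
  rw [h]
  exact (Complex.nonneg_iff.mp (hP.mul_mul_conjTranspose_same R).trace_nonneg).1

lemma re_trace_conjTranspose_mul_mul_le (hρ : ρ.PosSemidef) (X Y : Matrix m m ℂ) :
    (Xᴴ * Y * ρ).trace.re ≤ √(snormSq ρ X) * √(snormSq ρ Y) := by
  let := ρ.toMatrixSeminormedAddCommGroup hρ
  let := ρ.toMatrixInnerProductSpace hρ
  have inner_eq (X Y : Matrix m m ℂ) : (inner ℂ X Y : ℂ) = (Xᴴ * Y * ρ).trace := by
    rw [Matrix.mul_assoc, trace_mul_comm]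
    rfl
  have norm_eq (X : Matrix m m ℂ) : ‖X‖ = √(snormSq ρ X) := by
    rw [@norm_eq_sqrt_re_inner ℂ, inner_eq]
    rfl
  simpa only [inner_eq, norm_eq, RCLike.re_to_complex] using re_inner_le_norm (𝕜 := ℂ) X Y

variable [DecidableEq m]

lemma snormSq_nonneg (hρ : ρ.PosSemidef) (X : Matrix m m ℂ) : 0 ≤ snormSq ρ X :=
  re_trace_mul_nonneg (posSemidef_conjTranspose_mul_self X) hρ

lemma snormSq_mul_le_of_contraction (hρ : ρ.PosSemidef) {U : Matrix m m ℂ} (hU : Uᴴ * U ≤ 1)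
    (W : Matrix m m ℂ) : snormSq ρ (U * W) ≤ snormSq ρ W := by
  have h := re_trace_mul_nonneg ((le_iff.mp hU).conjTranspose_mul_mul_same W) hρ
  rw [Matrix.mul_sub, Matrix.sub_mul, Matrix.mul_one, Matrix.sub_mul, trace_sub, Complex.sub_re,
    sub_nonneg] at h
  simpa only [snormSq, conjTranspose_mul, Matrix.mul_assoc] using h

lemma re_trace_contraction_mul_le (hρ : ρ.PosSemidef) {U : Matrix m m ℂ} (hU : Uᴴ * U ≤ 1)
    (Z W : Matrix m m ℂ) :
    (Uᴴ * (Z * ρ * Wᴴ)).trace.re ≤ √(snormSq ρ Z) * √(snormSq ρ W) := by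
  have h : (Uᴴ * (Z * ρ * Wᴴ)).trace = ((U * W)ᴴ * Z * ρ).trace := by
    rw [conjTranspose_mul, Matrix.mul_assoc Wᴴ, Matrix.mul_assoc Wᴴ, trace_mul_comm Wᴴ]
    simp only [Matrix.mul_assoc]
  calc (Uᴴ * (Z * ρ * Wᴴ)).trace.re ≤ √(snormSq ρ (U * W)) * √(snormSq ρ Z) := by
        rw [h]
        exact re_trace_conjTranspose_mul_mul_le hρ _ _
    _ ≤ √(snormSq ρ W) * √(snormSq ρ Z) := by
        gcongr
        exact snormSq_mul_le_of_contraction hρ hU W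
    _ = √(snormSq ρ Z) * √(snormSq ρ W) := mul_comm _ _

lemma traceNorm_conj_sub_conj_le (hρ : ρ.PosSemidef) (X Y : Matrix m m ℂ) :
    traceNorm (X * ρ * Xᴴ - Y * ρ * Yᴴ) ≤
      √(snormSq ρ (X - Y)) * (√(snormSq ρ X) + √(snormSq ρ Y)) := by
  obtain ⟨U, hU, hUA⟩ := exists_conjTranspose_mul_eq_cfcAbs (X * ρ * Xᴴ - Y * ρ * Yᴴ)
  have hsplit : X * ρ * Xᴴ - Y * ρ * Yᴴ = (X - Y) * ρ * Xᴴ + Y * ρ * (X - Y)ᴴ := by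
    simp only [Matrix.sub_mul, Matrix.mul_sub, conjTranspose_sub]
    abel
  rw [traceNorm_eq_re_trace_cfcAbs, ← hUA, hsplit, Matrix.mul_add, trace_add, Complex.add_re]
  have h₁ := re_trace_contraction_mul_le hρ hU (X - Y) X
  have h₂ := re_trace_contraction_mul_le hρ hU Y (X - Y)
  nlinarith

end Seminorm

section Measurement

variable {m K : Type*} [Fintype m] [DecidableEq m] [Fintype K] {ρ : Matrix m m ℂ}

lemma sum_snormSq_eq_one (htr : ρ.trace = 1) {N : K → Matrix m m ℂ}
    (hN : ∑ a, (N a)ᴴ * N a = 1) : ∑ a, snormSq ρ (N a) = 1 := by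
  simp only [snormSq, ← Complex.re_sum, ← trace_sum, ← Finset.sum_mul, hN, Matrix.one_mul, htr,
    Complex.one_re]

lemma traceNorm_sum_single_kronecker_sub_le [DecidableEq K] (hρ : ρ.PosSemidef)
    (htr : ρ.trace = 1) {N₀ N₁ : K → Matrix m m ℂ}
    (h₀ : ∑ a, (N₀ a)ᴴ * N₀ a = 1) (h₁ : ∑ a, (N₁ a)ᴴ * N₁ a = 1) :
    traceNorm (∑ a, single a a (1 : ℂ) ⊗ₖ (N₀ a * ρ * (N₀ a)ᴴ - N₁ a * ρ * (N₁ a)ᴴ)) ≤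
      2 * √(∑ a, snormSq ρ (N₀ a - N₁ a)) := by
  set d := √(∑ a, snormSq ρ (N₀ a - N₁ a))
  have cauchySchwarz {N : K → Matrix m m ℂ} (hN : ∑ a, (N a)ᴴ * N a = 1) :
      ∑ a, √(snormSq ρ (N₀ a - N₁ a)) * √(snormSq ρ (N a)) ≤ d := by
    simpa [sum_snormSq_eq_one htr hN] using Real.sum_sqrt_mul_sqrt_le Finset.univ
      (fun a => snormSq_nonneg hρ (N₀ a - N₁ a)) (fun a => snormSq_nonneg hρ (N a))
  rw [traceNorm_sum_single_kronecker]
  calc ∑ a, traceNorm (N₀ a * ρ * (N₀ a)ᴴ - N₁ a * ρ * (N₁ a)ᴴ)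
      ≤ ∑ a, √(snormSq ρ (N₀ a - N₁ a)) * (√(snormSq ρ (N₀ a)) + √(snormSq ρ (N₁ a))) :=
        Finset.sum_le_sum fun a _ => traceNorm_conj_sub_conj_le hρ _ _
    _ = ∑ a, √(snormSq ρ (N₀ a - N₁ a)) * √(snormSq ρ (N₀ a)) +
          ∑ a, √(snormSq ρ (N₀ a - N₁ a)) * √(snormSq ρ (N₁ a)) := by
        simp only [mul_add, Finset.sum_add_distrib]
    _ ≤ 2 * d := by linarith [cauchySchwarz h₀, cauchySchwarz h₁]

end Measurement

/-- The trace distance of the post-measurement states of two measurements with the same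
outcome set is bounded by the state-dependent distance `dis_ρ(M₀,M₁)`. -/
theorem traceDist_postState_le {nx ny K : ℕ}
    (ρ : Matrix (Fin nx × Fin ny) (Fin nx × Fin ny) ℂ)
    (hρ : ρ.PosSemidef) (htr : ρ.trace = 1)
    (M : Fin 2 → Fin K → Matrix (Fin nx) (Fin nx) ℂ)
    (hcomp : ∀ i, ∑ a, (M i a)ᴴ * (M i a) = 1) :
    traceDist (postState ρ (M 0)) (postState ρ (M 1)) ≤
      Real.sqrt (∑ a, snormSq ρ ((M 0 a - M 1 a) ⊗ₖ (1 : Matrix (Fin ny) (Fin ny) ℂ))) := by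
  set N : Fin 2 → Fin K → Matrix (Fin nx × Fin ny) (Fin nx × Fin ny) ℂ :=
    fun i a => M i a ⊗ₖ (1 : Matrix (Fin ny) (Fin ny) ℂ)
  have hN (i : Fin 2) : ∑ a, (N i a)ᴴ * N i a = 1 := by
    simp only [N, conjTranspose_kronecker, conjTranspose_one, ← mul_kronecker_mul, Matrix.one_mul,
      ← Matrix.sum_kronecker, hcomp i, one_kronecker_one]
  have hdiff : postState ρ (M 0) - postState ρ (M 1) =
      ∑ a, single a a (1 : ℂ) ⊗ₖ (N 0 a * ρ * (N 0 a)ᴴ - N 1 a * ρ * (N 1 a)ᴴ) := by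
    simp only [postState, N, ← Finset.sum_sub_distrib, Matrix.kronecker_sub]
  have hbound := traceNorm_sum_single_kronecker_sub_le hρ htr (hN 0) (hN 1)
  simp only [N, ← Matrix.sub_kronecker] at hbound
  rw [traceDist, hdiff]
  linarith
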